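/- arXiv:2012.05738 — 9 statements merged into one kernel-verified Lean document; each statement's English description precedes it below -/
import Mathlib

section
/- Consider the MLP update function on [0,1]^n whose i-th component is u_i(s) = 1/(1 + ((1-β_i)/β_i)·exp(-Σ_{(b,i)∈E} w(b,i)·s_b)), with β_i ∈ (0,1). If every argument has at most P parents and all edge weights satisfy |w(b,i)| ≤ W with W·P < 4, then each component u_i is Lipschitz continuous with constant W·P/4 < 1 with respect to the sup-norm, and hence u is a contraction. -/
/-! Each component is the logistic map `x ↦ (1 + c e^{-x})⁻¹`, whose derivative `y / (1 + y)²`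
(with `y = c e^{-x} ≥ 0`) is at most `1/4`, composed with a weighted sum of at most `P` parent
values, which is `W P`-Lipschitz for the sup norm. -/

open Finset

lemma div_one_add_sq_le_quarter {y : ℝ} (hy : 0 ≤ y) : y / (1 + y) ^ 2 ≤ 1 / 4 := by
  rw [div_le_iff₀ (by positivity)]
  nlinarith [sq_nonneg (1 - y)]

lemma hasDerivAt_inv_one_add_mul_exp_neg {c : ℝ} (hc : 0 ≤ c) (x : ℝ) :
    HasDerivAt (fun x => (1 + c * Real.exp (-x))⁻¹)
      (c * Real.exp (-x) / (1 + c * Real.exp (-x)) ^ 2) x := by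
  have hden : HasDerivAt (fun x => 1 + c * Real.exp (-x)) (-(c * Real.exp (-x))) x := by
    simpa using (((Real.hasDerivAt_exp (-x)).comp x (hasDerivAt_neg x)).const_mul c).const_add 1
  exact (hden.inv (by positivity)).congr_deriv (by rw [neg_neg])

lemma lipschitzWith_inv_one_add_mul_exp_neg {c : ℝ} (hc : 0 ≤ c) :
    LipschitzWith (1 / 4) (fun x => (1 + c * Real.exp (-x))⁻¹) := by
  refine lipschitzWith_of_nnnorm_deriv_le
    (fun x => (hasDerivAt_inv_one_add_mul_exp_neg hc x).differentiableAt) fun x => ?_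
  rw [(hasDerivAt_inv_one_add_mul_exp_neg hc x).deriv, ← NNReal.coe_le_coe, coe_nnnorm,
    Real.norm_of_nonneg (by positivity)]
  simpa using div_one_add_sq_le_quarter (by positivity : 0 ≤ c * Real.exp (-x))

lemma abs_sum_mul_sub_sum_mul_le {α ι : Type*} [Fintype ι] (S : Finset α) (a : α → ℝ)
    (f : α → ι) {W : ℝ} (ha : ∀ p ∈ S, |a p| ≤ W) (s t : ι → ℝ) :
    |∑ p ∈ S, a p * s (f p) - ∑ p ∈ S, a p * t (f p)| ≤ #S * W * ‖s - t‖ := by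
  rw [← sum_sub_distrib, mul_assoc, ← nsmul_eq_mul, ← sum_const]
  refine (abs_sum_le_sum_abs _ _).trans (sum_le_sum fun p hp => ?_)
  rw [← mul_sub, abs_mul]
  have hst : |s (f p) - t (f p)| ≤ ‖s - t‖ := by
    simpa [Real.norm_eq_abs] using norm_le_pi_norm (s - t) (f p)
  calc |a p| * |s (f p) - t (f p)| ≤ |a p| * ‖s - t‖ := by gcongr
    _ ≤ W * ‖s - t‖ := by gcongr; exact ha p hp

theorem mlp_update_components_lipschitz (n : ℕ)
    (Edg : Finset (Fin n × Fin n)) (w : Fin n → Fin n → ℝ) (β : Fin n → ℝ)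
    (hβ : ∀ i, 0 < β i ∧ β i < 1)
    (P : ℕ) (W : ℝ) (hW0 : 0 ≤ W)
    (hP : ∀ i, (Edg.filter (fun p => p.2 = i)).card ≤ P)
    (hW : ∀ p ∈ Edg, |w p.1 p.2| ≤ W)
    (hWP : W * (P : ℝ) < 4)
    (u : (Fin n → ℝ) → (Fin n → ℝ))
    (hu : ∀ s i, u s i =
      1 / (1 + ((1 - β i) / β i) *
        Real.exp (-(∑ p ∈ Edg.filter (fun p => p.2 = i), w p.1 p.2 * s p.1)))) :
    (∀ (i : Fin n) (s t : Fin n → ℝ),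
        (∀ b, s b ∈ Set.Icc (0 : ℝ) 1) → (∀ b, t b ∈ Set.Icc (0 : ℝ) 1) →
        |u s i - u t i| ≤ (W * (P : ℝ) / 4) * ‖s - t‖) ∧
    W * (P : ℝ) / 4 < 1 ∧
    (∀ s t : Fin n → ℝ,
        (∀ b, s b ∈ Set.Icc (0 : ℝ) 1) → (∀ b, t b ∈ Set.Icc (0 : ℝ) 1) →
        ‖u s - u t‖ ≤ (W * (P : ℝ) / 4) * ‖s - t‖) := by
  have hcomp : ∀ i s t, |u s i - u t i| ≤ (W * (P : ℝ) / 4) * ‖s - t‖ := by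
    intro i s t
    set S := Edg.filter (fun p => p.2 = i)
    have hc : 0 ≤ (1 - β i) / β i := div_nonneg (by linarith [hβ i]) (hβ i).1.le
    have hcard : (#S : ℝ) * W ≤ P * W := by gcongr; exact_mod_cast hP i
    calc |u s i - u t i|
        ≤ 1 / 4 * |∑ p ∈ S, w p.1 p.2 * s p.1 - ∑ p ∈ S, w p.1 p.2 * t p.1| := by
          simpa only [hu, one_div, Real.dist_eq, NNReal.coe_inv, NNReal.coe_ofNat] using
            (lipschitzWith_inv_one_add_mul_exp_neg hc).dist_le_mul _ _
      _ ≤ 1 / 4 * (#S * W * ‖s - t‖) := by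
          gcongr
          exact abs_sum_mul_sub_sum_mul_le S _ Prod.fst
            (fun p hp => hW p (mem_filter.mp hp).1) s t
      _ ≤ W * P / 4 * ‖s - t‖ := by nlinarith [norm_nonneg (s - t)]
  refine ⟨fun i s t _ _ => hcomp i s t, by linarith, fun s t _ _ => ?_⟩
  refine (pi_norm_le_iff_of_nonneg (by positivity)).mpr fun i => ?_
  simpa [Real.norm_eq_abs] using hcomp i s t
end

section
/- If the QBAF is acyclic (the edge relation E induces a directed acyclic graph), then the iterative MLP-based strength computation converges: for each argument a, the sequence s_a^(k) is eventually constant, with s_a^(k) = s_a^(d) for all k ≥ d where d is the length of the longest directed path ending in a. -/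
/-!
Order the arguments by `depth`. The value of the update at `i` reads only coordinates of strictly
smaller depth, so by induction on `k` the `k`-th iterate is already stable at every argument of
depth at most `k`; at depth `0` there is no incoming edge and the update returns the base score.
-/

section LayeredIteration

variable {ι α : Type*} (depth : ι → ℕ) {u : (ι → α) → ι → α} {x : ι → α}

theorem iterate_succ_apply_eq_of_depth_le
    (hlocal : ∀ s t i, (∀ j, depth j < depth i → s j = t j) → u s i = u t i)
    (hbase : ∀ i, depth i = 0 → u x i = x i) :
    ∀ k i, depth i ≤ k → u^[k + 1] x i = u^[k] x i := by
  intro k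
  induction k with
  | zero => simpa using hbase
  | succ m ih =>
    intro i hi
    have h := hlocal (u^[m + 1] x) (u^[m] x) i fun j hj => ih j (by omega)
    rwa [← Function.iterate_succ_apply' u (m + 1), ← Function.iterate_succ_apply' u m] at h

theorem iterate_apply_eq_iterate_depth_of_le
    (hlocal : ∀ s t i, (∀ j, depth j < depth i → s j = t j) → u s i = u t i)
    (hbase : ∀ i, depth i = 0 → u x i = x i) (i : ι) {k : ℕ} (hk : depth i ≤ k) :
    u^[k] x i = u^[depth i] x i := by
  induction k, hk using Nat.le_induction with
  | base => rfl
  | succ m hm ih => rw [iterate_succ_apply_eq_of_depth_le depth hlocal hbase m i hm, ih]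

end LayeredIteration

theorem one_div_one_add_one_sub_div_self {b : ℝ} (hb : b ≠ 0) : 1 / (1 + (1 - b) / b) = b := by
  field_simp
  ring

theorem mlp_acyclic_converges (n : ℕ)
    (Edg : Finset (Fin n × Fin n)) (w : Fin n → Fin n → ℝ) (β : Fin n → ℝ)
    (hβ : ∀ i, 0 < β i ∧ β i < 1)
    (depth : Fin n → ℕ)
    (hacyclic : ∀ p ∈ Edg, depth p.1 < depth p.2)
    (u : (Fin n → ℝ) → (Fin n → ℝ))
    (hu : ∀ s i, u s i =
      1 / (1 + ((1 - β i) / β i) *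
        Real.exp (-(∑ p ∈ Edg.filter (fun p => p.2 = i), w p.1 p.2 * s p.1)))) :
    ∀ (a : Fin n) (k : ℕ), depth a ≤ k → u^[k] β a = u^[depth a] β a := by
  have hlocal : ∀ s t i, (∀ j, depth j < depth i → s j = t j) → u s i = u t i := by
    intro s t i hst
    rw [hu, hu, Finset.sum_congr rfl]
    intro p hp
    rw [Finset.mem_filter] at hp
    rw [hst p.1 (hp.2 ▸ hacyclic p hp.1)]
  have hbase : ∀ i, depth i = 0 → u β i = β i := by
    intro i hi
    have hsources : Edg.filter (fun p => p.2 = i) = ∅ :=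
      Finset.filter_eq_empty_iff.mpr fun p hp hpi =>
        Nat.not_lt_zero _ (hi ▸ hpi ▸ hacyclic p hp)
    rw [hu, hsources, Finset.sum_empty, neg_zero, Real.exp_zero, mul_one,
      one_div_one_add_one_sub_div_self (hβ i).1.ne']
  exact fun a k hk => iterate_apply_eq_iterate_depth_of_le depth hlocal hbase a hk
end

section
/- Equivalence: in any fixed point σ of the MLP update function, if arguments a and b have equal base scores β(a) = β(b) and there are bijections h : Att(a) → Att(b) and h' : Sup(a) → Sup(b) with σ(x) = σ(h(x)) and σ(y) = σ(h'(y)) for all attackers x and supporters y of a, then σ(a) = σ(b). -/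
theorem mlp_equivalence_general {A : Type}
    (Att Sup : A → Finset A) (σ β : A → ℝ)
    (hfix : ∀ c, σ c = 1 / (1 + ((1 - β c) / β c) *
      Real.exp (∑ x ∈ Att c, σ x - ∑ x ∈ Sup c, σ x)))
    (a b : A) (hβ : β a = β b)
    (h h' : A → A)
    (hbij : Set.BijOn h ↑(Att a) ↑(Att b))
    (hbij' : Set.BijOn h' ↑(Sup a) ↑(Sup b))
    (hσh : ∀ x ∈ Att a, σ x = σ (h x))
    (hσh' : ∀ y ∈ Sup a, σ y = σ (h' y)) :
    σ a = σ b := by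
  have hAtt : ∑ x ∈ Att a, σ x = ∑ x ∈ Att b, σ x :=
    Finset.sum_nbij h hbij.mapsTo hbij.injOn hbij.surjOn hσh
  have hSup : ∑ y ∈ Sup a, σ y = ∑ y ∈ Sup b, σ y :=
    Finset.sum_nbij h' hbij'.mapsTo hbij'.injOn hbij'.surjOn hσh'
  rw [hfix a, hfix b, hβ, hAtt, hSup]

theorem mlp_equivalence {A : Type} [DecidableEq A]
    (Att Sup : A → Finset A) (σ β : A → ℝ)
    (hfix : ∀ c, σ c = 1 / (1 + ((1 - β c) / β c) *
      Real.exp (∑ x ∈ Att c, σ x - ∑ x ∈ Sup c, σ x)))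
    (a b : A) (hβa : 0 < β a) (hβa1 : β a < 1) (hβ : β a = β b)
    (h h' : A → A)
    (hbij : Set.BijOn h ↑(Att a) ↑(Att b))
    (hbij' : Set.BijOn h' ↑(Sup a) ↑(Sup b))
    (hσh : ∀ x ∈ Att a, σ x = σ (h x))
    (hσh' : ∀ y ∈ Sup a, σ y = σ (h' y)) :
    σ a = σ b :=
  mlp_equivalence_general Att Sup σ β hfix a b hβ h h' hbij hbij' hσh hσh'
end

section
/- Neutrality: in any fixed point σ of the MLP update function, if β(a) = β(b), Att(a) ⊆ Att(b), Sup(a) ⊆ Sup(b), Att(b) ∪ Sup(b) = Att(a) ∪ Sup(a) ∪ {d} with σ(d) = 0, then σ(a) = σ(b). -/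
namespace Finset

variable {α M : Type*} [DecidableEq α] [AddCommMonoid M]

theorem sdiff_subset_singleton_of_union_eq {s s' t t' : Finset α} {d : α} (ht : t ⊆ t')
    (hdisj : Disjoint s' t') (hunion : s' ∪ t' = s ∪ t ∪ {d}) : s' \ s ⊆ {d} := by
  intro x hx
  obtain ⟨hxs', hxs⟩ := mem_sdiff.1 hx
  have hxt : x ∉ t := fun h => disjoint_left.1 hdisj hxs' (ht h)
  have hx_union : x ∈ s ∪ t ∪ {d} := hunion ▸ mem_union_left t' hxs'
  simpa [hxs, hxt] using hx_union

theorem sum_eq_sum_of_union_eq {s s' t t' : Finset α} {d : α} {f : α → M} (hs : s ⊆ s')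
    (ht : t ⊆ t') (hdisj : Disjoint s' t') (hunion : s' ∪ t' = s ∪ t ∪ {d}) (hd : f d = 0) :
    ∑ x ∈ s, f x = ∑ x ∈ s', f x :=
  sum_subset hs fun x hxs' hxs => by
    have hxd : x ∈ ({d} : Finset α) :=
      sdiff_subset_singleton_of_union_eq ht hdisj hunion (mem_sdiff.2 ⟨hxs', hxs⟩)
    rwa [mem_singleton.1 hxd]

end Finset

theorem mlp_neutrality_general {A : Type} [DecidableEq A]
    (Att Sup : A → Finset A) (σ β : A → ℝ)
    (hfix : ∀ c, σ c = 1 / (1 + ((1 - β c) / β c) *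
      Real.exp (∑ x ∈ Att c, σ x - ∑ x ∈ Sup c, σ x)))
    (hdisj : ∀ c, Disjoint (Att c) (Sup c))
    (a b d : A) (hβ : β a = β b)
    (hAtt : Att a ⊆ Att b) (hSup : Sup a ⊆ Sup b)
    (hunion : Att b ∪ Sup b = Att a ∪ Sup a ∪ {d})
    (hd : σ d = 0) :
    σ a = σ b := by
  have hunion' : Sup b ∪ Att b = Sup a ∪ Att a ∪ {d} := by
    rw [Finset.union_comm (Sup b), hunion, Finset.union_comm (Sup a)]
  have hAtt_sum := Finset.sum_eq_sum_of_union_eq hAtt hSup (hdisj b) hunion hd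
  have hSup_sum := Finset.sum_eq_sum_of_union_eq hSup hAtt (hdisj b).symm hunion' hd
  rw [hfix a, hfix b, hβ, hAtt_sum, hSup_sum]

theorem mlp_neutrality {A : Type} [DecidableEq A]
    (Att Sup : A → Finset A) (σ β : A → ℝ)
    (hfix : ∀ c, σ c = 1 / (1 + ((1 - β c) / β c) *
      Real.exp (∑ x ∈ Att c, σ x - ∑ x ∈ Sup c, σ x)))
    (hdisj : ∀ c, Disjoint (Att c) (Sup c))
    (a b d : A) (hβa : 0 < β a) (hβa1 : β a < 1) (hβ : β a = β b)
    (hAtt : Att a ⊆ Att b) (hSup : Sup a ⊆ Sup b)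
    (hunion : Att b ∪ Sup b = Att a ∪ Sup a ∪ {d})
    (hd : σ d = 0) :
    σ a = σ b :=
  mlp_neutrality_general Att Sup σ β hfix hdisj a b d hβ hAtt hSup hunion hd
end

section
/- Monotony: in any fixed point σ of the MLP update function, if 0 < β(a) = β(b) < 1, Att(a) ⊆ Att(b) and Sup(a) ⊇ Sup(b), then σ(a) ≥ σ(b). -/
open Finset

theorem antitone_one_div_one_add_mul_exp {k : ℝ} (hk : 0 ≤ k) :
    Antitone fun t => 1 / (1 + k * Real.exp t) := fun _ _ hst =>
  one_div_le_one_div_of_le (by positivity)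
    (add_le_add_right (mul_le_mul_of_nonneg_left (Real.exp_le_exp.mpr hst) hk) 1)

theorem Finset.sum_sub_sum_le_sum_sub_sum {ι : Type*} {f : ι → ℝ} (hf : ∀ i, 0 ≤ f i)
    {s s' t t' : Finset ι} (hs : s ⊆ s') (ht : t' ⊆ t) :
    ∑ i ∈ s, f i - ∑ i ∈ t, f i ≤ ∑ i ∈ s', f i - ∑ i ∈ t', f i :=
  sub_le_sub (sum_le_sum_of_subset_of_nonneg hs fun i _ _ => hf i)
    (sum_le_sum_of_subset_of_nonneg ht fun i _ _ => hf i)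

theorem mlp_monotony_general {A : Type}
    (Att Sup : A → Finset A) (σ β : A → ℝ)
    (hfix : ∀ c, σ c = 1 / (1 + ((1 - β c) / β c) *
      Real.exp (∑ x ∈ Att c, σ x - ∑ x ∈ Sup c, σ x)))
    (hσ : ∀ c, 0 ≤ σ c ∧ σ c ≤ 1)
    (a b : A) (hβ0 : 0 < β a) (hβ : β a = β b) (hβ1 : β b < 1)
    (hAtt : Att a ⊆ Att b) (hSup : Sup b ⊆ Sup a) :
    σ a ≥ σ b := by
  have hodds : 0 ≤ (1 - β a) / β a := div_nonneg (by linarith) hβ0.le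
  rw [hfix a, hfix b, ← hβ]
  exact antitone_one_div_one_add_mul_exp hodds
    (sum_sub_sum_le_sum_sub_sum (fun c => (hσ c).1) hAtt hSup)

theorem mlp_monotony {A : Type} [DecidableEq A]
    (Att Sup : A → Finset A) (σ β : A → ℝ)
    (hfix : ∀ c, σ c = 1 / (1 + ((1 - β c) / β c) *
      Real.exp (∑ x ∈ Att c, σ x - ∑ x ∈ Sup c, σ x)))
    (hσ : ∀ c, 0 ≤ σ c ∧ σ c ≤ 1)
    (a b : A) (hβ0 : 0 < β a) (hβ : β a = β b) (hβ1 : β b < 1)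
    (hAtt : Att a ⊆ Att b) (hSup : Sup b ⊆ Sup a) :
    σ a ≥ σ b :=
  mlp_monotony_general Att Sup σ β hfix hσ a b hβ0 hβ hβ1 hAtt hSup
end

section
/- Strict Monotony: in any fixed point σ of the MLP update function, if 0 < β(a) = β(b) < 1, Att(a) ⊆ Att(b), Sup(a) ⊇ Sup(b), and additionally either Att(a)⁺ ⊊ Att(b)⁺ or Sup(a)⁺ ⊋ Sup(b)⁺ (where S⁺ = {x ∈ S : σ(x) > 0}), then σ(a) > σ(b). -/
open Finset in
theorem Finset.sum_lt_sum_of_filter_pos_ssubset {ι M : Type*} [AddCommMonoid M] [PartialOrder M]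
    [IsOrderedCancelAddMonoid M] [DecidableLT M] {s t : Finset ι} {f : ι → M}
    (hf : ∀ i, 0 ≤ f i) (h : s.filter (fun i => 0 < f i) ⊂ t.filter (fun i => 0 < f i)) :
    ∑ i ∈ s, f i < ∑ i ∈ t, f i := by
  have sum_filter_pos (u : Finset ι) : ∑ i ∈ u.filter (fun i => 0 < f i), f i = ∑ i ∈ u, f i :=
    sum_filter_of_ne fun i _ hi => (hf i).lt_of_ne' hi
  obtain ⟨i, hit, his⟩ := (ssubset_iff_of_subset h.subset).mp h
  rw [← sum_filter_pos s, ← sum_filter_pos t]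
  exact sum_lt_sum_of_subset h.subset hit his (mem_filter.mp hit).2 fun j _ _ => hf j

theorem strictAnti_one_div_one_add_mul_exp {c : ℝ} (hc : 0 < c) :
    StrictAnti fun z => 1 / (1 + c * Real.exp z) := fun _ _ hxy =>
  one_div_lt_one_div_of_lt (by positivity) (by gcongr)

theorem mlp_strict_monotony_general {A : Type}
    (Att Sup : A → Finset A) (σ β : A → ℝ)
    (hfix : ∀ c, σ c = 1 / (1 + ((1 - β c) / β c) *
      Real.exp (∑ x ∈ Att c, σ x - ∑ x ∈ Sup c, σ x)))
    (hσ : ∀ c, 0 ≤ σ c ∧ σ c ≤ 1)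
    (a b : A) (hβ0 : 0 < β a) (hβ : β a = β b) (hβ1 : β b < 1)
    (hAtt : Att a ⊆ Att b) (hSup : Sup b ⊆ Sup a)
    (hstrict : (Att a).filter (fun x => 0 < σ x) ⊂ (Att b).filter (fun x => 0 < σ x) ∨
               (Sup b).filter (fun x => 0 < σ x) ⊂ (Sup a).filter (fun x => 0 < σ x)) :
    σ a > σ b := by
  have hσ0 (x : A) : 0 ≤ σ x := (hσ x).1
  have hAtt_le := Finset.sum_le_sum_of_subset_of_nonneg hAtt fun x _ _ => hσ0 x
  have hSup_le := Finset.sum_le_sum_of_subset_of_nonneg hSup fun x _ _ => hσ0 x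
  have henergy : ∑ x ∈ Att a, σ x - ∑ x ∈ Sup a, σ x < ∑ x ∈ Att b, σ x - ∑ x ∈ Sup b, σ x := by
    rcases hstrict with hlt | hlt
    · linarith [Finset.sum_lt_sum_of_filter_pos_ssubset hσ0 hlt]
    · linarith [Finset.sum_lt_sum_of_filter_pos_ssubset hσ0 hlt]
  have hc : 0 < (1 - β a) / β a := div_pos (by linarith) hβ0
  rw [hfix a, hfix b, ← hβ]
  exact strictAnti_one_div_one_add_mul_exp hc henergy

theorem mlp_strict_monotony {A : Type} [DecidableEq A]
    (Att Sup : A → Finset A) (σ β : A → ℝ)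
    (hfix : ∀ c, σ c = 1 / (1 + ((1 - β c) / β c) *
      Real.exp (∑ x ∈ Att c, σ x - ∑ x ∈ Sup c, σ x)))
    (hσ : ∀ c, 0 ≤ σ c ∧ σ c ≤ 1)
    (a b : A) (hβ0 : 0 < β a) (hβ : β a = β b) (hβ1 : β b < 1)
    (hAtt : Att a ⊆ Att b) (hSup : Sup b ⊆ Sup a)
    (hstrict : (Att a).filter (fun x => 0 < σ x) ⊂ (Att b).filter (fun x => 0 < σ x) ∨
               (Sup b).filter (fun x => 0 < σ x) ⊂ (Sup a).filter (fun x => 0 < σ x)) :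
    σ a > σ b :=
  mlp_strict_monotony_general Att Sup σ β hfix hσ a b hβ0 hβ hβ1 hAtt hSup hstrict
end

section
/- Reinforcement: in any fixed point σ of the MLP update function, if 0 < β(a) = β(b) < 1, Att(a) \ {x} = Att(b) \ {y} with x ∈ Att(a), y ∈ Att(b), Sup(a) \ {x'} = Sup(b) \ {y'} with x' ∈ Sup(a), y' ∈ Sup(b), and σ(x) ≤ σ(y) and σ(x') ≥ σ(y'), then σ(a) ≥ σ(b). -/
/-! Removing one attacker and one supporter from `a` and `b` leaves the same sets, so the
energy `∑ Att σ - ∑ Sup σ` of `a` is at most that of `b`; the MLP update is antitone in the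
energy when `0 < β ≤ 1`. -/

open Real

lemma Finset.sum_sub_eq_of_erase_eq {ι M : Type*} [DecidableEq ι] [AddCommGroup M]
    {s t : Finset ι} {i j : ι} (f : ι → M) (hi : i ∈ s) (hj : j ∈ t)
    (hst : s.erase i = t.erase j) :
    ∑ u ∈ s, f u - f i = ∑ u ∈ t, f u - f j := by
  rw [← Finset.sum_erase_eq_sub hi, ← Finset.sum_erase_eq_sub hj, hst]

noncomputable def mlpUpdate (β E : ℝ) : ℝ :=
  1 / (1 + (1 - β) / β * exp E)

lemma mlpUpdate_antitone {β : ℝ} (hβ0 : 0 < β) (hβ1 : β ≤ 1) : Antitone (mlpUpdate β) := by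
  intro E F hEF
  have hc : 0 ≤ (1 - β) / β := div_nonneg (by linarith) hβ0.le
  have hpos : 0 < 1 + (1 - β) / β * exp E := by positivity
  apply one_div_le_one_div_of_le hpos
  gcongr

theorem mlp_reinforcement_general {A : Type} [DecidableEq A]
    (Att Sup : A → Finset A) (σ β : A → ℝ)
    (hfix : ∀ c, σ c = 1 / (1 + ((1 - β c) / β c) *
      Real.exp (∑ u ∈ Att c, σ u - ∑ u ∈ Sup c, σ u)))
    (a b x y x' y' : A)
    (hβ0 : 0 < β a) (hβ : β a = β b) (hβ1 : β b < 1)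
    (hx : x ∈ Att a) (hy : y ∈ Att b)
    (hAtt : (Att a).erase x = (Att b).erase y)
    (hx' : x' ∈ Sup a) (hy' : y' ∈ Sup b)
    (hSup : (Sup a).erase x' = (Sup b).erase y')
    (hxy : σ x ≤ σ y) (hxy' : σ x' ≥ σ y') :
    σ a ≥ σ b := by
  have hAtt_sum := Finset.sum_sub_eq_of_erase_eq σ hx hy hAtt
  have hSup_sum := Finset.sum_sub_eq_of_erase_eq σ hx' hy' hSup
  have henergy : ∑ u ∈ Att a, σ u - ∑ u ∈ Sup a, σ u ≤
      ∑ u ∈ Att b, σ u - ∑ u ∈ Sup b, σ u := by linarith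
  rw [hfix a, hfix b, ← hβ]
  exact mlpUpdate_antitone hβ0 (hβ ▸ hβ1.le) henergy

theorem mlp_reinforcement {A : Type} [DecidableEq A]
    (Att Sup : A → Finset A) (σ β : A → ℝ)
    (hfix : ∀ c, σ c = 1 / (1 + ((1 - β c) / β c) *
      Real.exp (∑ u ∈ Att c, σ u - ∑ u ∈ Sup c, σ u)))
    (hσ : ∀ c, 0 ≤ σ c ∧ σ c ≤ 1)
    (a b x y x' y' : A)
    (hβ0 : 0 < β a) (hβ : β a = β b) (hβ1 : β b < 1)
    (hx : x ∈ Att a) (hy : y ∈ Att b)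
    (hAtt : (Att a).erase x = (Att b).erase y)
    (hx' : x' ∈ Sup a) (hy' : y' ∈ Sup b)
    (hSup : (Sup a).erase x' = (Sup b).erase y')
    (hxy : σ x ≤ σ y) (hxy' : σ x' ≥ σ y') :
    σ a ≥ σ b :=
  mlp_reinforcement_general Att Sup σ β hfix a b x y x' y' hβ0 hβ hβ1 hx hy hAtt hx' hy' hSup hxy
    hxy'
end

section
/- Franklin: in any fixed point σ of the MLP update function, if β(a) = β(b) ∈ (0,1), Att(a) = Att(b) ∪ {x}, Sup(a) = Sup(b) ∪ {y} with x ∉ Att(b), y ∉ Sup(b), and σ(x) = σ(y), then σ(a) = σ(b). -/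
theorem mlp_franklin_general {A : Type} [DecidableEq A]
    (Att Sup : A → Finset A) (σ β : A → ℝ)
    (hfix : ∀ c, σ c = 1 / (1 + ((1 - β c) / β c) *
      Real.exp (∑ u ∈ Att c, σ u - ∑ u ∈ Sup c, σ u)))
    (a b x y : A)
    (hβ : β a = β b)
    (hxb : x ∉ Att b) (hyb : y ∉ Sup b)
    (hAtt : Att a = insert x (Att b)) (hSup : Sup a = insert y (Sup b))
    (hxy : σ x = σ y) :
    σ a = σ b := by
  rw [hfix a, hfix b, hβ, hAtt, hSup, Finset.sum_insert hxb, Finset.sum_insert hyb, hxy,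
    add_sub_add_left_eq_sub]

theorem mlp_franklin {A : Type} [DecidableEq A]
    (Att Sup : A → Finset A) (σ β : A → ℝ)
    (hfix : ∀ c, σ c = 1 / (1 + ((1 - β c) / β c) *
      Real.exp (∑ u ∈ Att c, σ u - ∑ u ∈ Sup c, σ u)))
    (a b x y : A)
    (hβ0 : 0 < β a) (hβ1 : β a < 1) (hβ : β a = β b)
    (hxb : x ∉ Att b) (hyb : y ∉ Sup b)
    (hAtt : Att a = insert x (Att b)) (hSup : Sup a = insert y (Sup b))
    (hxy : σ x = σ y) :
    σ a = σ b :=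
  mlp_franklin_general Att Sup σ β hfix a b x y hβ hxb hyb hAtt hSup hxy
end

section
/- Weakening: in any fixed point σ of the MLP update function, suppose β(a) ∈ (0,1) and there is an injection g : Sup(a) → Att(a) with σ(x) ≤ σ(g(x)) for all x ∈ Sup(a), and additionally either there exists d ∈ Att(a) \ g(Sup(a)) with σ(d) > 0, or there exists x ∈ Sup(a) with σ(x) < σ(g(x)). Then σ(a) < β(a). -/
/-!
Through the injection `g`, the strengths of the supporters of `a` are dominated by those of
distinct attackers, strictly so under either alternative; hence `A_a = ∑ Att - ∑ Sup > 0`.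
The map `t ↦ 1 / (1 + c · exp t)` with `c = (1 - β) / β > 0` equals `β` at `t = 0` and is
strictly decreasing.
-/

namespace Finset

variable {ι M : Type*} [DecidableEq ι] [AddCommMonoid M] [PartialOrder M]
  [IsOrderedCancelAddMonoid M] {s t : Finset ι} {g : ι → ι} {f : ι → M}

theorem sum_lt_sum_of_injOn (hmaps : ∀ x ∈ s, g x ∈ t) (hinj : Set.InjOn g s)
    (hf : ∀ i ∈ t, 0 ≤ f i) (hle : ∀ x ∈ s, f x ≤ f (g x))
    (hstrict : (∃ d ∈ t, d ∉ s.image g ∧ 0 < f d) ∨ ∃ x ∈ s, f x < f (g x)) :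
    ∑ x ∈ s, f x < ∑ y ∈ t, f y := by
  have himg : s.image g ⊆ t := image_subset_iff.mpr hmaps
  have hsum_image : ∑ x ∈ s, f (g x) = ∑ y ∈ s.image g, f y :=
    (sum_image fun _ hx _ hy h => hinj hx hy h).symm
  rcases hstrict with ⟨d, hd, hdn, hdpos⟩ | ⟨x, hx, hlt⟩
  · calc ∑ x ∈ s, f x ≤ ∑ x ∈ s, f (g x) := sum_le_sum hle
      _ = ∑ y ∈ s.image g, f y := hsum_image
      _ < ∑ y ∈ t, f y := sum_lt_sum_of_subset himg hd hdn hdpos fun i hi _ => hf i hi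
  · calc ∑ x ∈ s, f x < ∑ x ∈ s, f (g x) := sum_lt_sum hle ⟨x, hx, hlt⟩
      _ = ∑ y ∈ s.image g, f y := hsum_image
      _ ≤ ∑ y ∈ t, f y := sum_le_sum_of_subset_of_nonneg himg fun i hi _ => hf i hi

end Finset

theorem one_div_one_add_mul_exp_lt {c t : ℝ} (hc : 0 < c) (ht : 0 < t) :
    1 / (1 + c * Real.exp t) < 1 / (1 + c) := by
  have hexp : 1 < Real.exp t := Real.one_lt_exp_iff.mpr ht
  exact one_div_lt_one_div_of_lt (by linarith) (by nlinarith)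

theorem one_div_one_add_odds {β : ℝ} (hβ : β ≠ 0) : 1 / (1 + (1 - β) / β) = β := by
  field_simp
  ring

theorem mlp_weakening {A : Type} [DecidableEq A]
    (Att Sup : A → Finset A) (σ β : A → ℝ)
    (hfix : ∀ c, σ c = 1 / (1 + ((1 - β c) / β c) *
      Real.exp (∑ x ∈ Att c, σ x - ∑ x ∈ Sup c, σ x)))
    (hσ : ∀ c, 0 ≤ σ c)
    (a : A) (hβ0 : 0 < β a) (hβ1 : β a < 1)
    (g : A → A)
    (hmaps : ∀ x ∈ Sup a, g x ∈ Att a)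
    (hinj : Set.InjOn g ↑(Sup a))
    (hle : ∀ x ∈ Sup a, σ x ≤ σ (g x))
    (hstrict : (∃ d ∈ Att a, d ∉ (Sup a).image g ∧ 0 < σ d) ∨
               ∃ x ∈ Sup a, σ x < σ (g x)) :
    σ a < β a := by
  have hsum : ∑ x ∈ Sup a, σ x < ∑ x ∈ Att a, σ x :=
    Finset.sum_lt_sum_of_injOn hmaps hinj (fun i _ => hσ i) hle hstrict
  have hodds : 0 < (1 - β a) / β a := div_pos (by linarith) hβ0
  calc σ a = 1 / (1 + ((1 - β a) / β a) *
        Real.exp (∑ x ∈ Att a, σ x - ∑ x ∈ Sup a, σ x)) := hfix a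
    _ < 1 / (1 + (1 - β a) / β a) := one_div_one_add_mul_exp_lt hodds (sub_pos.mpr hsum)
    _ = β a := one_div_one_add_odds hβ0.ne'
end
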